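/- Smoothing Lemma: every connected graph G with at least 3 vertices has a solvable distribution D of minimum size (|D| = π_OPT(G)) such that D places at most two pebbles on every vertex of degree 2 and zero pebbles on every vertex of degree 1. -/

import Mathlib

open SimpleGraph

variable {V : Type*}

/-- Apply a pebbling move along the ordered pair `e`. -/
def applyMove [DecidableEq V] (D : V → ℕ) (e : V × V) : V → ℕ :=
  fun w => if w = e.1 then D w - 2 else if w = e.2 then D w + 1 else D w

/-- A list of ordered pairs is a valid pebbling sequence from `D`. -/
def ValidSeq [DecidableEq V] (G : SimpleGraph V) : (V → ℕ) → List (V × V) → Prop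
  | _, [] => True
  | D, e :: l => G.Adj e.1 e.2 ∧ 2 ≤ D e.1 ∧ ValidSeq G (applyMove D e) l

def applySeq [DecidableEq V] (D : V → ℕ) : List (V × V) → (V → ℕ)
  | [] => D
  | e :: l => applySeq (applyMove D e) l

/-- `r` is `m`-reachable under `D`. -/
def Reaches [DecidableEq V] (G : SimpleGraph V) (D : V → ℕ) (r : V) (m : ℕ) : Prop :=
  ∃ l : List (V × V), ValidSeq G D l ∧ m ≤ applySeq D l r

def Solvable [DecidableEq V] (G : SimpleGraph V) (D : V → ℕ) : Prop :=
  ∀ r : V, Reaches G D r 1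

noncomputable def pebNumTo [Fintype V] [DecidableEq V] (G : SimpleGraph V) (r : V) : ℕ :=
  sInf {k : ℕ | ∀ D : V → ℕ, (∑ v, D v) = k → Reaches G D r 1}

noncomputable def pebNum [Fintype V] [DecidableEq V] (G : SimpleGraph V) : ℕ :=
  sInf {k : ℕ | ∀ D : V → ℕ, (∑ v, D v) = k → Solvable G D}

noncomputable def optPebNum [Fintype V] [DecidableEq V] (G : SimpleGraph V) : ℕ :=
  sInf {k : ℕ | ∃ D : V → ℕ, (∑ v, D v) = k ∧ Solvable G D}

/-!
Among the optimal solvable distributions, sweep all pebbles of a leaf onto its neighbour, or fire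
a degree-two vertex holding at least three pebbles (it loses two, each neighbour gains one). Both
operations preserve the size, and preserve solvability because every pebbling sequence of the old
distribution can be simulated from the new one. If no optimal distribution were smooth, iterating
would produce an infinite sequence of optimal distributions, which must revisit a distribution.
Between two visits every vertex acts, since a neighbour of an acting vertex gains pebbles that only
its own action removes; so all degrees are at most two and at least `|V| - 2` vertices have degree
two. Such a vertex keeps a pebble once it has fired, so when one of them fires the distribution has
at least `|V|` pebbles. But two pebbles on a vertex of degree at least two, none on its neighbours
and one everywhere else form a solvable distribution of size less than `|V|`.
-/

open Finset

section Moves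
variable [DecidableEq V] {G : SimpleGraph V}

lemma validSeq_append {D : V → ℕ} {l₁ l₂ : List (V × V)} :
    ValidSeq G D (l₁ ++ l₂) ↔ ValidSeq G D l₁ ∧ ValidSeq G (applySeq D l₁) l₂ := by
  induction l₁ generalizing D with
  | nil => simp [ValidSeq, applySeq]
  | cons e l ih => simp [ValidSeq, applySeq, ih, and_assoc]

lemma applySeq_append {D : V → ℕ} {l₁ l₂ : List (V × V)} :
    applySeq D (l₁ ++ l₂) = applySeq (applySeq D l₁) l₂ := by
  induction l₁ generalizing D with
  | nil => rfl
  | cons e l ih => exact ih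

lemma validSeq_singleton {D : V → ℕ} {a b : V} :
    ValidSeq G D [(a, b)] ↔ G.Adj a b ∧ 2 ≤ D a := by
  simp [ValidSeq]

lemma applyMove_add_le_applyMove {D E : V → ℕ} {a b w : V} {k : ℕ} (h : D w + k ≤ E w)
    (ha : 2 ≤ D a) : applyMove D (a, b) w + k ≤ applyMove E (a, b) w := by
  dsimp only [applyMove]
  split_ifs <;> subst_vars <;> omega

lemma applyMove_le_applyMove_add {D E : V → ℕ} {a b w : V} {k : ℕ} (h : D w ≤ E w + k)
    (ha : 2 ≤ E a) : applyMove D (a, b) w ≤ applyMove E (a, b) w + k := by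
  dsimp only [applyMove]
  split_ifs <;> subst_vars <;> omega

variable (G) in
def IsSimulation (R : (V → ℕ) → (V → ℕ) → Prop) : Prop :=
  ∀ D E a b, R D E → G.Adj a b → 2 ≤ D a →
    ∃ l, ValidSeq G E l ∧ R (applyMove D (a, b)) (applySeq E l)

lemma IsSimulation.exists_validSeq {R : (V → ℕ) → (V → ℕ) → Prop} (hR : IsSimulation G R)
    {l : List (V × V)} {D E : V → ℕ} (hl : ValidSeq G D l) (hDE : R D E) :
    ∃ l', ValidSeq G E l' ∧ R (applySeq D l) (applySeq E l') := by
  induction l generalizing D E with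
  | nil => exact ⟨[], trivial, hDE⟩
  | cons e l ih =>
    obtain ⟨hadj, hmove, hl⟩ := hl
    obtain ⟨l₁, hl₁, hR₁⟩ := hR D E e.1 e.2 hDE hadj hmove
    obtain ⟨l₂, hl₂, hR₂⟩ := ih hl hR₁
    exact ⟨l₁ ++ l₂, validSeq_append.2 ⟨hl₁, hl₂⟩, by rwa [applySeq_append]⟩

lemma IsSimulation.reaches {R : (V → ℕ) → (V → ℕ) → Prop} (hR : IsSimulation G R)
    {D E : V → ℕ} {r : V} {m : ℕ} (hDE : R D E) (hr : ∀ D E, R D E → D r ≤ E r)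
    (h : Reaches G D r m) : Reaches G E r m := by
  obtain ⟨l, hl, hm⟩ := h
  obtain ⟨l', hl', hR'⟩ := hR.exists_validSeq hl hDE
  exact ⟨l', hl', hm.trans (hr _ _ hR')⟩

end Moves

section Transfer
variable [DecidableEq V] {G : SimpleGraph V} [DecidableRel G.Adj]

variable (G) in
def transfer (D : V → ℕ) (v : V) (k m : ℕ) : V → ℕ :=
  fun w => if w = v then D v - k else if G.Adj v w then D w + m else D w

variable {D : V → ℕ} {v w : V} {k m : ℕ}

lemma transfer_self : transfer G D v k m v = D v - k := if_pos rfl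

lemma transfer_of_adj (h : G.Adj v w) : transfer G D v k m w = D w + m := by
  rw [transfer, if_neg h.ne', if_pos h]

lemma le_transfer_of_ne (h : w ≠ v) : D w ≤ transfer G D v k m w := by
  rw [transfer, if_neg h]
  split_ifs <;> omega

lemma sum_transfer_add [Fintype V] (hk : k ≤ D v) :
    ∑ w, transfer G D v k m w + k = ∑ w, D w + m * G.degree v := by
  have hpt : ∀ w, transfer G D v k m w + (if w = v then k else 0) =
      D w + if G.Adj v w then m else 0 := by
    intro w
    dsimp only [transfer]
    split_ifs with h₁ h₂ <;> subst_vars <;> simp_all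
  have hsum := congrArg (∑ w, · w) (funext hpt)
  simp only [sum_add_distrib, sum_ite_eq', mem_univ, if_true, sum_ite, sum_const_zero,
    add_zero, sum_const, smul_eq_mul] at hsum
  rw [hsum, ← neighborFinset_eq_filter, card_neighborFinset_eq_degree, mul_comm]

end Transfer

section Firing
variable [DecidableEq V] {G : SimpleGraph V}

variable (G) in
/-- `E` dominates `D`, except that `E` may already have fired `v` once. -/
def FireInv (v : V) (D E : V → ℕ) : Prop :=
  (∀ w, w ≠ v → D w ≤ E w) ∧ (D v ≤ E v ∨ D v ≤ E v + 2 ∧ ∀ w, G.Adj v w → D w + 1 ≤ E w)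

lemma isSimulation_fireInv (v : V) : IsSimulation G (FireInv G v) := by
  rintro D E a b ⟨hoff, hv⟩ hab ha
  by_cases hskip : a = v ∧ E v ≤ 1
  · -- `E` has already made this move as part of firing `v`, so it stays put.
    obtain ⟨rfl, hEa⟩ := hskip
    obtain ⟨hva, hnbr⟩ := hv.resolve_left (by omega)
    refine ⟨[], trivial, fun w hw => ?_, Or.inl ?_⟩
    · dsimp only [applySeq, applyMove]
      rw [if_neg hw]
      split_ifs with hwb
      · exact hwb ▸ hnbr b hab
      · exact hoff w hw
    · simp only [applySeq, applyMove, if_true]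
      omega
  · have hEa : 2 ≤ E a := by
      by_cases hav : a = v
      · subst hav
        by_contra hlt
        exact hskip ⟨rfl, by omega⟩
      · exact ha.trans (hoff a hav)
    refine ⟨[(a, b)], validSeq_singleton.2 ⟨hab, hEa⟩,
      fun w hw => applyMove_le_applyMove_add (k := 0) (hoff w hw) hEa, ?_⟩
    rcases hv with hv | ⟨hv, hnbr⟩
    · exact Or.inl (applyMove_le_applyMove_add (k := 0) hv hEa)
    · exact Or.inr ⟨applyMove_le_applyMove_add hv hEa,
        fun w hw => applyMove_add_le_applyMove (hnbr w hw) ha⟩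

variable [DecidableRel G.Adj]

lemma solvable_transfer_two_one {D : V → ℕ} {v : V} (hD : Solvable G D) (hv : 3 ≤ D v) :
    Solvable G (transfer G D v 2 1) := by
  intro r
  by_cases hr : r = v
  · subst hr
    refine ⟨[], trivial, ?_⟩
    simp only [applySeq, transfer_self]
    omega
  · refine (isSimulation_fireInv v).reaches ⟨fun w hw => le_transfer_of_ne hw,
      Or.inr ⟨?_, fun w hw => ?_⟩⟩ (fun _ _ h => h.1 r hr) (hD r)
    · rw [transfer_self]
      omega
    · rw [transfer_of_adj hw]

end Firing

section Sweeping
variable [DecidableEq V] {G : SimpleGraph V}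

/-- `E` dominates `D` once the pebbles on `v` are counted at `u`. -/
def SweepInv (v u : V) (D E : V → ℕ) : Prop :=
  (∀ w, w ≠ v → w ≠ u → D w ≤ E w) ∧ D u + D v ≤ E u ∧ D u + 1 ≤ E u

lemma isSimulation_sweepInv {v u : V} (hvu : ∀ w, G.Adj v w ↔ w = u) :
    IsSimulation G (SweepInv v u) := by
  rintro D E a b ⟨hoff, hu, hu'⟩ hab ha
  have huv : u ≠ v := ((hvu u).2 rfl).ne'
  by_cases hav : a = v
  · subst hav
    obtain rfl : b = u := (hvu b).1 hab
    refine ⟨[], trivial, fun w hw hwu => ?_, ?_, ?_⟩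
    · simpa [applySeq, applyMove, hw, hwu] using hoff w hw hwu
    all_goals simp only [applySeq, applyMove, if_neg huv, ↓reduceIte]; omega
  by_cases hbv : b = v
  · subst hbv
    obtain rfl : a = u := (hvu a).1 hab.symm
    refine ⟨[], trivial, fun w hw hwu => ?_, ?_, ?_⟩
    · simpa [applySeq, applyMove, hw, hwu] using hoff w hw hwu
    all_goals simp only [applySeq, applyMove, if_neg huv.symm, ↓reduceIte]; omega
  have hEa : 2 ≤ E a := by
    by_cases hau : a = u
    · subst hau
      omega
    · exact ha.trans (hoff a hav hau)
  have hDv : applyMove D (a, b) v = D v := by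
    simp only [applyMove, if_neg (Ne.symm hav), if_neg (Ne.symm hbv)]
  refine ⟨[(a, b)], validSeq_singleton.2 ⟨hab, hEa⟩,
    fun w hw hwu => applyMove_le_applyMove_add (k := 0) (hoff w hw hwu) hEa, ?_,
    applyMove_add_le_applyMove hu' ha⟩
  rw [hDv]
  exact applyMove_add_le_applyMove hu ha

variable [DecidableRel G.Adj]

lemma solvable_transfer_of_forall_adj_iff {D : V → ℕ} {v u : V}
    (hvu : ∀ w, G.Adj v w ↔ w = u) (hD : Solvable G D) (hv : 1 ≤ D v) :
    Solvable G (transfer G D v (D v) (D v)) := by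
  have hadj : G.Adj v u := (hvu u).2 rfl
  have hinv : SweepInv v u D (transfer G D v (D v) (D v)) :=
    ⟨fun w hw _ => le_transfer_of_ne hw, by rw [transfer_of_adj hadj],
      by rw [transfer_of_adj hadj]; omega⟩
  intro r
  by_cases hr : r = v
  · -- A pebble reaching `u` in `D` is matched by two pebbles at `u`, which move one to `v`.
    subst hr
    obtain ⟨l, hl, hlu⟩ := hD u
    obtain ⟨l', hl', -, -, hu⟩ := (isSimulation_sweepInv hvu).exists_validSeq hl hinv
    refine ⟨l' ++ [(u, r)], validSeq_append.2 ⟨hl', validSeq_singleton.2 ⟨hadj.symm, ?_⟩⟩, ?_⟩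
    · omega
    · simp [applySeq_append, applySeq, applyMove, hadj.ne]
  · exact (isSimulation_sweepInv hvu).reaches hinv
      (fun _ _ ⟨hoff, _, hu⟩ =>
        if hru : r = u then hru ▸ (Nat.le_succ _).trans hu else hoff r hr hru) (hD r)

end Sweeping

lemma SimpleGraph.Preconnected.mem_of_adj_mem {G : SimpleGraph V} {S : Set V}
    (hG : G.Preconnected) (hS : ∀ ⦃v w⦄, G.Adj v w → v ∈ S → w ∈ S) {v : V} (hv : v ∈ S)
    (w : V) : w ∈ S := by
  by_contra hw
  obtain ⟨p⟩ := hG v w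
  obtain ⟨d, -, hd₁, hd₂⟩ := p.exists_boundary_dart S hv hw
  exact hd₂ (hS d.adj hd₁)

section Degrees
variable [Fintype V] {G : SimpleGraph V} [DecidableRel G.Adj]

lemma SimpleGraph.Connected.two_mul_card_le_sum_degree_add_two (hG : G.Connected) :
    2 * Fintype.card V ≤ ∑ v, G.degree v + 2 := by
  have hE := hG.card_vert_le_card_edgeSet_add_one
  rw [Nat.card_eq_fintype_card, Nat.card_eq_fintype_card, ← edgeFinset_card] at hE
  rw [sum_degrees_eq_twice_card_edges]
  omega

lemma SimpleGraph.Connected.exists_two_le_degree (hG : G.Connected)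
    (hn : 3 ≤ Fintype.card V) : ∃ v, 2 ≤ G.degree v := by
  by_contra! h
  have hsum : ∑ v, G.degree v ≤ ∑ _v : V, 1 := sum_le_sum fun v _ => Nat.le_of_lt_succ (h v)
  have := hG.two_mul_card_le_sum_degree_add_two
  simp only [sum_const, card_univ, smul_eq_mul, mul_one] at hsum
  omega

lemma SimpleGraph.Connected.card_le_card_degree_eq_two_add_two (hG : G.Connected)
    (hdeg : ∀ v, G.degree v ≤ 2) : Fintype.card V ≤ #{v | G.degree v = 2} + 2 := by
  have hsum : ∑ v, G.degree v ≤ ∑ v, (1 + if G.degree v = 2 then 1 else 0) :=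
    sum_le_sum fun v _ => by have := hdeg v; split_ifs <;> omega
  have := hG.two_mul_card_le_sum_degree_add_two
  simp only [sum_add_distrib, sum_const, card_univ, smul_eq_mul, mul_one, sum_boole,
    Nat.cast_id] at hsum
  omega

end Degrees

section Optimal
variable [Fintype V] [DecidableEq V] {G : SimpleGraph V}

variable (G) in
lemma exists_solvable_sum_eq_optPebNum :
    ∃ D : V → ℕ, Solvable G D ∧ ∑ v, D v = optPebNum G := by
  have hone : Solvable G fun _ => 1 := fun _ => ⟨[], trivial, le_rfl⟩
  obtain ⟨D, hsum, hD⟩ : optPebNum G ∈ {k | ∃ D : V → ℕ, ∑ v, D v = k ∧ Solvable G D} :=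
    Nat.sInf_mem ⟨_, _, rfl, hone⟩
  exact ⟨D, hD, hsum⟩

lemma optPebNum_le_sum {D : V → ℕ} (hD : Solvable G D) : optPebNum G ≤ ∑ v, D v :=
  Nat.sInf_le ⟨D, rfl, hD⟩

lemma optPebNum_lt_card [DecidableRel G.Adj] {v : V} (hv : 2 ≤ G.degree v) :
    optPebNum G < Fintype.card V := by
  set D : V → ℕ := fun w => if w = v then 2 else if G.Adj v w then 0 else 1
  have hpt : ∀ w, D w + (if G.Adj v w then 1 else 0) = 1 + if w = v then 1 else 0 := by
    intro w
    by_cases hw : w = v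
    · subst hw
      simp [D]
    · by_cases hvw : G.Adj v w <;> simp [D, hw, hvw]
  have hsum := congrArg (∑ w, · w) (funext hpt)
  simp only [sum_add_distrib, sum_boole, sum_const, card_univ, smul_eq_mul, mul_one,
    filter_eq', mem_univ, if_true, card_singleton, Nat.cast_id, ← neighborFinset_eq_filter,
    card_neighborFinset_eq_degree] at hsum
  have hD : Solvable G D := by
    intro r
    by_cases hr : r = v
    · exact ⟨[], trivial, by simp [applySeq, D, hr]⟩
    by_cases hvr : G.Adj v r
    · refine ⟨[(v, r)], validSeq_singleton.2 ⟨hvr, by simp [D]⟩, ?_⟩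
      simp [applySeq, applyMove, D, hr]
    · exact ⟨[], trivial, by simp [applySeq, D, hr, hvr]⟩
  have := optPebNum_le_sum hD
  omega

end Optimal

section Smoothing
variable [Fintype V] [DecidableEq V] {G : SimpleGraph V} [DecidableRel G.Adj]

variable (G) in
def SmoothingStep (D D' : V → ℕ) (v : V) : Prop :=
  G.degree v = 1 ∧ 1 ≤ D v ∧ D' = transfer G D v (D v) (D v) ∨
    G.degree v = 2 ∧ 3 ≤ D v ∧ D' = transfer G D v 2 1

lemma exists_smoothingStep {D : V → ℕ}
    (hD : ¬((∀ v, G.degree v = 2 → D v ≤ 2) ∧ ∀ v, G.degree v = 1 → D v = 0)) :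
    ∃ D' v, SmoothingStep G D D' v := by
  simp only [not_and_or, not_forall, exists_prop] at hD
  rcases hD with ⟨v, hv, hDv⟩ | ⟨v, hv, hDv⟩
  · exact ⟨_, v, Or.inr ⟨hv, by omega, rfl⟩⟩
  · exact ⟨_, v, Or.inl ⟨hv, by omega, rfl⟩⟩

namespace SmoothingStep

variable {D D' : V → ℕ} {v w : V}

lemma solvable (h : SmoothingStep G D D' v) (hD : Solvable G D) : Solvable G D' := by
  rcases h with ⟨hv, hDv, rfl⟩ | ⟨-, hDv, rfl⟩
  · obtain ⟨u, hu⟩ := card_eq_one.1 ((card_neighborFinset_eq_degree G v).trans hv)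
    refine solvable_transfer_of_forall_adj_iff (u := u) (fun w => ?_) hD hDv
    rw [← mem_neighborFinset, hu, mem_singleton]
  · exact solvable_transfer_two_one hD hDv

lemma sum_eq (h : SmoothingStep G D D' v) : ∑ w, D' w = ∑ w, D w := by
  rcases h with ⟨hv, -, rfl⟩ | ⟨hv, hDv, rfl⟩
  · have := sum_transfer_add (G := G) (m := D v) (le_refl (D v))
    rw [hv, mul_one] at this
    omega
  · have := sum_transfer_add (G := G) (m := 1) (show 2 ≤ D v by omega)
    rw [hv] at this
    omega

lemma degree_le_two (h : SmoothingStep G D D' v) : G.degree v ≤ 2 := by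
  rcases h with ⟨hv, -⟩ | ⟨hv, -⟩ <;> omega

lemma three_le_of_degree_eq_two (h : SmoothingStep G D D' v) (hv : G.degree v = 2) :
    3 ≤ D v := by
  rcases h with ⟨hv', -⟩ | ⟨-, hDv, -⟩ <;> omega

lemma le_of_ne (h : SmoothingStep G D D' v) (hw : w ≠ v) : D w ≤ D' w := by
  rcases h with ⟨-, -, rfl⟩ | ⟨-, -, rfl⟩ <;> exact le_transfer_of_ne hw

lemma lt_of_adj (h : SmoothingStep G D D' v) (hw : G.Adj v w) : D w < D' w := by
  rcases h with ⟨-, hDv, rfl⟩ | ⟨-, -, rfl⟩ <;> rw [transfer_of_adj hw] <;> omega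

lemma one_le_of_degree_eq_two (h : SmoothingStep G D D' v) (hw : G.degree w = 2)
    (hDw : 1 ≤ D w ∨ w = v) : 1 ≤ D' w := by
  by_cases hwv : w = v
  · subst hwv
    rcases h with ⟨hv, -⟩ | ⟨-, hDv, rfl⟩
    · omega
    · rw [transfer_self]
      omega
  · exact (hDw.resolve_right hwv).trans (h.le_of_ne hwv)

end SmoothingStep

end Smoothing

lemma exists_seq_of_forall_exists {α : Type*} {P : α → Prop} {R : α → α → Prop}
    (h : ∀ x, P x → ∃ y, P y ∧ R x y) {x : α} (hx : P x) :
    ∃ f : ℕ → α, f 0 = x ∧ ∀ k, R (f k) (f (k + 1)) := by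
  choose next hnextP hnextR using h
  let F : {x // P x} → {x // P x} := fun y => ⟨next y y.2, hnextP y y.2⟩
  refine ⟨fun k => (F^[k] ⟨x, hx⟩).1, rfl, fun k => ?_⟩
  simp only [Function.iterate_succ_apply']
  exact hnextR _ _

lemma exists_lt_eq_of_sum_eq [Fintype V] [DecidableEq V] {g : ℕ → V → ℕ} {s : ℕ}
    (hg : ∀ k, ∑ v, g k v = s) : ∃ i j, i < j ∧ g i = g j :=
  (piAntidiag univ s).finite_toSet.exists_lt_map_eq_of_forall_mem fun k => by simp [hg k]

def IsSmoothingOrbit [Fintype V] [DecidableEq V] (G : SimpleGraph V) [DecidableRel G.Adj]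
    (g : ℕ → V → ℕ) (act : ℕ → V) : Prop :=
  ∀ k, SmoothingStep G (g k) (g (k + 1)) (act k)

namespace IsSmoothingOrbit

variable [Fintype V] [DecidableEq V] {G : SimpleGraph V} [DecidableRel G.Adj]
  {g : ℕ → V → ℕ} {act : ℕ → V}

lemma sum_eq (hg : IsSmoothingOrbit G g act) (k : ℕ) : ∑ v, g k v = ∑ v, g 0 v := by
  induction k with
  | zero => rfl
  | succ k ih => rw [(hg k).sum_eq, ih]

lemma le_of_forall_ne (hg : IsSmoothingOrbit G g act) {w : V} {a b : ℕ} (hab : a ≤ b)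
    (hw : ∀ t, a ≤ t → t < b → act t ≠ w) : g a w ≤ g b w := by
  induction b, hab using Nat.le_induction with
  | base => exact le_rfl
  | succ b hab ih =>
    exact (ih fun t h₁ h₂ => hw t h₁ (by omega)).trans
      ((hg b).le_of_ne (hw b hab (by omega)).symm)

lemma one_le_of_le (hg : IsSmoothingOrbit G g act) {w : V} (hw : G.degree w = 2) {a b : ℕ}
    (hab : a ≤ b) (ha : 1 ≤ g a w) : 1 ≤ g b w := by
  induction b, hab using Nat.le_induction with
  | base => exact ha
  | succ b _ ih => exact (hg b).one_le_of_degree_eq_two hw (Or.inl ih)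

lemma exists_act_eq_of_eq (hg : IsSmoothingOrbit G g act) (hG : G.Preconnected) {i j : ℕ}
    (hij : i < j) (heq : g i = g j) (w : V) : ∃ t, i ≤ t ∧ t < j ∧ act t = w := by
  refine hG.mem_of_adj_mem (S := {w | ∃ t, i ≤ t ∧ t < j ∧ act t = w}) ?_
    ⟨i, le_rfl, hij, rfl⟩ w
  rintro - u hvu ⟨t, hit, htj, rfl⟩
  by_contra hu
  simp only [Set.mem_ofPred_eq, not_exists, not_and] at hu
  have h₁ := hg.le_of_forall_ne hit fun t' h₁ h₂ => hu t' h₁ (by omega)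
  have h₂ := (hg t).lt_of_adj hvu
  have h₃ := hg.le_of_forall_ne (show t + 1 ≤ j by omega) fun t' h₁ h₂ => hu t' (by omega) h₂
  rw [heq] at h₁
  omega

theorem card_le_sum (hg : IsSmoothingOrbit G g act) (hG : G.Connected)
    (hn : 3 ≤ Fintype.card V) : Fintype.card V ≤ ∑ v, g 0 v := by
  obtain ⟨i, j, hij, heq⟩ := exists_lt_eq_of_sum_eq hg.sum_eq
  have hact := hg.exists_act_eq_of_eq hG.preconnected hij heq
  set K : Finset V := {v | G.degree v = 2}
  have hK : Fintype.card V ≤ #K + 2 := hG.card_le_card_degree_eq_two_add_two fun w => by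
    obtain ⟨t, -, -, rfl⟩ := hact w
    exact (hg t).degree_le_two
  obtain ⟨w₁, hw₁⟩ : K.Nonempty := card_pos.1 (by omega)
  obtain ⟨t₁, ht₁, -, rfl⟩ := hact w₁
  -- Each degree-two vertex acts before time `j`, so holds a pebble at time `j`, i.e. at time `i`.
  have hpos : ∀ w ∈ K, 1 ≤ g t₁ w := by
    intro w hw
    have hw2 : G.degree w = 2 := (mem_filter.1 hw).2
    obtain ⟨t, -, htj, rfl⟩ := hact w
    have hj := hg.one_le_of_le hw2 (show t + 1 ≤ j by omega)
      ((hg t).one_le_of_degree_eq_two hw2 (Or.inr rfl))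
    exact hg.one_le_of_le hw2 ht₁ (heq ▸ hj)
  have hrest : #(K.erase (act t₁)) ≤ ∑ w ∈ K.erase (act t₁), g t₁ w := by
    simpa using card_nsmul_le_sum _ _ 1 fun w hw => hpos w (mem_of_mem_erase hw)
  calc Fintype.card V ≤ #(K.erase (act t₁)) + 3 := by rw [card_erase_of_mem hw₁]; omega
    _ ≤ ∑ w ∈ K.erase (act t₁), g t₁ w + g t₁ (act t₁) :=
      add_le_add hrest ((hg t₁).three_le_of_degree_eq_two (mem_filter.1 hw₁).2)
    _ = ∑ w ∈ K, g t₁ w := sum_erase_add _ _ hw₁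
    _ ≤ ∑ w, g t₁ w := sum_le_sum_of_subset (subset_univ K)
    _ = ∑ w, g 0 w := hg.sum_eq t₁

end IsSmoothingOrbit

theorem smoothing_lemma [Fintype V] [DecidableEq V] (G : SimpleGraph V)
    [DecidableRel G.Adj] (hG : G.Connected) (hn : 3 ≤ Fintype.card V) :
    ∃ D : V → ℕ, Solvable G D ∧ (∑ v, D v) = optPebNum G ∧
      (∀ v : V, G.degree v = 2 → D v ≤ 2) ∧
      (∀ v : V, G.degree v = 1 → D v = 0) := by
  obtain ⟨D₀, hD₀, hsum₀⟩ := exists_solvable_sum_eq_optPebNum G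
  by_contra hnone
  have hstep : ∀ D : V → ℕ, Solvable G D ∧ ∑ v, D v = optPebNum G →
      ∃ D', (Solvable G D' ∧ ∑ v, D' v = optPebNum G) ∧ ∃ v, SmoothingStep G D D' v := by
    rintro D ⟨hD, hsum⟩
    obtain ⟨D', v, hDD'⟩ := exists_smoothingStep fun hsmooth => hnone ⟨D, hD, hsum, hsmooth⟩
    exact ⟨D', ⟨hDD'.solvable hD, hDD'.sum_eq.trans hsum⟩, v, hDD'⟩
  obtain ⟨g, rfl, hg⟩ := exists_seq_of_forall_exists hstep ⟨hD₀, hsum₀⟩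
  choose act hact using hg
  obtain ⟨v, hv⟩ := hG.exists_two_le_degree hn
  have := IsSmoothingOrbit.card_le_sum hact hG hn
  have := optPebNum_lt_card hv
  omega
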